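/- arXiv:quant-ph/0304054 — 5 statements merged into one kernel-verified Lean document; each statement's English description precedes it below -/
import Mathlib

section
/- Let q ∈ ℂ and let X and Z be invertible d × d complex matrices satisfying XZ = qZX, and assume the representation is irreducible in the sense that every d × d complex matrix commuting with both X and Z is a scalar multiple of the identity. Then there exist complex scalars x and z such that X^d = x·I and Z^d = z·I. -/
open Matrix

/-- if invertible `d × d` complex matrices satisfy `XZ = qZX` and the
representation is irreducible (every matrix commuting with both `X` and `Z` is scalar),
then `X^d` and `Z^d` are scalar multiples of the identity. -/
theorem quantum_plane_powers_scalar (d : ℕ) (hd : 1 ≤ d) (q : ℂ)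
    (X Z : Matrix (Fin d) (Fin d) ℂ) (hX : IsUnit X) (hZ : IsUnit Z)
    (hrel : X * Z = q • (Z * X))
    (hirr : ∀ M : Matrix (Fin d) (Fin d) ℂ,
      M * X = X * M → M * Z = Z * M → ∃ c : ℂ, M = c • (1 : Matrix (Fin d) (Fin d) ℂ)) :
    (∃ x : ℂ, X ^ d = x • (1 : Matrix (Fin d) (Fin d) ℂ)) ∧
    (∃ z : ℂ, Z ^ d = z • (1 : Matrix (Fin d) (Fin d) ℂ)) := by
  -- q^d = 1 via determinants
  have hdetX : X.det ≠ 0 := by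
    simpa [isUnit_iff_ne_zero] using hX.map (detMonoidHom (n := Fin d) (R := ℂ))
  have hdetZ : Z.det ≠ 0 := by
    simpa [isUnit_iff_ne_zero] using hZ.map (detMonoidHom (n := Fin d) (R := ℂ))
  have hdet : X.det * Z.det = q ^ d * (Z.det * X.det) := by
    have := congrArg Matrix.det hrel
    simpa [Matrix.det_mul, Matrix.det_smul, Fintype.card_fin] using this
  have hq : q ^ d = 1 := by
    have h1 : q ^ d * (X.det * Z.det) = 1 * (X.det * Z.det) := by
      rw [one_mul]; linear_combination -hdet
    exact mul_right_cancel₀ (mul_ne_zero hdetX hdetZ) h1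
  have hXn : ∀ n : ℕ, X ^ n * Z = q ^ n • (Z * X ^ n) := by
    intro n
    induction n with
    | zero => simp
    | succ n ih =>
      calc X ^ (n + 1) * Z = X ^ n * (X * Z) := by rw [pow_succ, mul_assoc]
        _ = X ^ n * (q • (Z * X)) := by rw [hrel]
        _ = q • ((X ^ n * Z) * X) := by rw [Matrix.mul_smul, mul_assoc]
        _ = q • ((q ^ n • (Z * X ^ n)) * X) := by rw [ih]
        _ = q ^ (n + 1) • (Z * X ^ (n + 1)) := by
          rw [Matrix.smul_mul, smul_smul, pow_succ, pow_succ, mul_assoc, mul_comm q]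
  have hZn : ∀ n : ℕ, X * Z ^ n = q ^ n • (Z ^ n * X) := by
    intro n
    induction n with
    | zero => simp
    | succ n ih =>
      calc X * Z ^ (n + 1) = (X * Z ^ n) * Z := by rw [pow_succ, ← mul_assoc]
        _ = (q ^ n • (Z ^ n * X)) * Z := by rw [ih]
        _ = q ^ n • (Z ^ n * (X * Z)) := by rw [Matrix.smul_mul, mul_assoc]
        _ = q ^ n • (Z ^ n * (q • (Z * X))) := by rw [hrel]
        _ = q ^ (n + 1) • (Z ^ (n + 1) * X) := by
          rw [Matrix.mul_smul, smul_smul, pow_succ, pow_succ, mul_assoc]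
  constructor
  · exact hirr (X ^ d) (pow_mul_comm' X d) (by rw [hXn d, hq, one_smul])
  · refine hirr (Z ^ d) ?_ (pow_mul_comm' Z d)
    have := hZn d
    rw [hq, one_smul] at this
    exact this.symm
end

section
/- Let m₁, n₁, m₂, n₂ be integers with m₁n₂ − m₂n₁ ≡ 1 (mod d), and define Z̄ = exp(−iπ(d−1)m₁n₁/d)·Z^{m₁} X^{n₁} and X̄ = exp(−iπ(d−1)m₂n₂/d)·Z^{m₂} X^{n₂}. Then the barred generators satisfy the same quantum plane relation as Z and X, namely X̄ Z̄ = ω Z̄ X̄. -/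
open Matrix

/-- ω = exp(2πi/d), a primitive d-th root of unity. -/
noncomputable def qomega (d : ℕ) : ℂ := Complex.exp (2 * Real.pi * Complex.I / d)

/-- Generalized Pauli `Z`: `Z e_k = ω^k e_k`. -/
noncomputable def Zmat (d : ℕ) [NeZero d] : Matrix (ZMod d) (ZMod d) ℂ :=
  Matrix.diagonal fun k => qomega d ^ k.val

/-- Generalized Pauli `X`: `X e_k = e_{k-1}` (index mod d). -/
noncomputable def Xmat (d : ℕ) [NeZero d] : Matrix (ZMod d) (ZMod d) ℂ :=
  Matrix.of fun j k => if k = j + 1 then 1 else 0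

/-- The rescaled basis element `exp(−iπ(d−1)mn/d)·Z^m X^n`. -/
noncomputable def barGen (d : ℕ) [NeZero d] (m n : ℕ) : Matrix (ZMod d) (ZMod d) ℂ :=
  Complex.exp (-(Real.pi * Complex.I * ((d : ℂ) - 1) * m * n) / d)
    • (Zmat d ^ m * Xmat d ^ n)

lemma qomega_ne_zero (d : ℕ) : qomega d ≠ 0 := Complex.exp_ne_zero _

lemma qomega_pow_d (d : ℕ) [NeZero d] : qomega d ^ d = 1 := by
  rw [qomega, ← Complex.exp_nat_mul]
  have hd : (d : ℂ) ≠ 0 := Nat.cast_ne_zero.mpr (NeZero.ne d)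
  have : (d : ℂ) * (2 * Real.pi * Complex.I / d) = 2 * Real.pi * Complex.I := by
    field_simp
  rw [this, Complex.exp_two_pi_mul_I]

lemma qomega_zpow_congr (d : ℕ) [NeZero d] {a b : ℤ} (h : a ≡ b [ZMOD (d:ℤ)]) :
    qomega d ^ a = qomega d ^ b := by
  obtain ⟨k, hk⟩ := h.dvd
  have hb : b = a + d * k := by linarith
  subst hb
  rw [zpow_add₀ (qomega_ne_zero d), _root_.zpow_mul, zpow_natCast, qomega_pow_d,
    _root_.one_zpow, mul_one]

lemma qomega_pow_congr (d : ℕ) [NeZero d] {a b : ℕ} (h : a ≡ b [MOD d]) :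
    qomega d ^ a = qomega d ^ b := by
  have := qomega_zpow_congr d (Int.ModEq.symm (Int.natCast_modEq_iff.mpr h.symm))
  simpa using this

lemma X_mul_Z (d : ℕ) [NeZero d] :
    Xmat d * Zmat d = qomega d • (Zmat d * Xmat d) := by
  ext j k
  simp only [Xmat, Zmat, Matrix.mul_diagonal, Matrix.diagonal_mul, Matrix.smul_apply,
    Matrix.of_apply, smul_eq_mul]
  by_cases hk : k = j + 1
  · subst hk
    simp only [if_pos rfl, one_mul, mul_one]
    have hmod : (j + 1 : ZMod d).val ≡ j.val + 1 [MOD d] := by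
      apply (ZMod.natCast_eq_natCast_iff _ _ _).mp
      push_cast [ZMod.natCast_val, ZMod.cast_id]
      ring
    rw [qomega_pow_congr d hmod, pow_succ]
    ring
  · simp [hk]

lemma X_mul_Z_pow (d : ℕ) [NeZero d] (m : ℕ) :
    Xmat d * Zmat d ^ m = (qomega d ^ m) • (Zmat d ^ m * Xmat d) := by
  induction m with
  | zero => simp
  | succ n ih =>
    rw [pow_succ, ← mul_assoc, ih, smul_mul_assoc, mul_assoc, X_mul_Z, mul_smul_comm,
      smul_smul, ← mul_assoc, pow_succ]

lemma X_pow_mul_Z_pow (d : ℕ) [NeZero d] (m n : ℕ) :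
    Xmat d ^ n * Zmat d ^ m = (qomega d ^ (m * n)) • (Zmat d ^ m * Xmat d ^ n) := by
  induction n with
  | zero => simp
  | succ k ih =>
    rw [pow_succ, mul_assoc, X_mul_Z_pow, mul_smul_comm, ← mul_assoc, ih, smul_mul_assoc,
      smul_smul, mul_assoc, ← pow_succ, ← pow_add]
    ring_nf

lemma ZX_mul_ZX (d : ℕ) [NeZero d] (a b c e : ℕ) :
    (Zmat d ^ a * Xmat d ^ b) * (Zmat d ^ c * Xmat d ^ e)
      = (qomega d ^ (c * b)) • (Zmat d ^ (a + c) * Xmat d ^ (b + e)) := by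
  rw [mul_assoc, ← mul_assoc (Xmat d ^ b), X_pow_mul_Z_pow, smul_mul_assoc, mul_smul_comm]
  congr 1
  rw [← mul_assoc, ← mul_assoc, ← pow_add, mul_assoc, ← pow_add]

/-- if `m₁n₂ − m₂n₁ ≡ 1 (mod d)` then the barred generators
`Z̄ = exp(−iπ(d−1)m₁n₁/d) Z^{m₁} X^{n₁}` and `X̄ = exp(−iπ(d−1)m₂n₂/d) Z^{m₂} X^{n₂}`
satisfy the quantum plane relation `X̄ Z̄ = ω Z̄ X̄`. -/
theorem barred_generators_quantum_plane (d : ℕ) [NeZero d] (hd : 2 ≤ d)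
    (m₁ n₁ m₂ n₂ : ℕ)
    (h : (m₁ * n₂ : ℤ) - (m₂ * n₁ : ℤ) ≡ 1 [ZMOD (d : ℤ)]) :
    barGen d m₂ n₂ * barGen d m₁ n₁ = qomega d • (barGen d m₁ n₁ * barGen d m₂ n₂) := by
  have key : qomega d ^ (m₁ * n₂) = qomega d * qomega d ^ (m₂ * n₁) := by
    have h2 : ((m₁ * n₂ : ℕ) : ℤ) ≡ ((m₂ * n₁ + 1 : ℕ) : ℤ) [ZMOD (d : ℤ)] := by
      push_cast
      have h4 := h.add_right ((m₂ : ℤ) * n₁)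
      simpa [sub_add_cancel, add_comm] using h4
    have h3 := qomega_zpow_congr d h2
    rw [zpow_natCast, zpow_natCast] at h3
    rw [h3, pow_succ]
    ring
  unfold barGen
  simp only [smul_mul_assoc, mul_smul_comm, ZX_mul_ZX, smul_smul]
  rw [add_comm m₂ m₁, add_comm n₂ n₁]
  congr 1
  rw [key]
  ring
end

section
/- Let G be the graph on vertices {1,…,6} with edge set {{1,3},{2,4},{3,4},{3,5},{4,6}}. Its qudit cluster state φ_G satisfies the derived correlation identities X_1 X_5† φ_G = φ_G, X_2 X_6† φ_G = φ_G, Z_1† X_3 Z_5† X_6† φ_G = φ_G, and Z_2† X_4 Z_6† X_5† φ_G = φ_G. -/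
open Matrix

/-- The one-qudit operator `A` acting on the tensor factor at site `a`. -/
noncomputable def siteOp (d : ℕ) [NeZero d] {V : Type} [Fintype V] [DecidableEq V]
    (a : V) (A : Matrix (ZMod d) (ZMod d) ℂ) : Matrix (V → ZMod d) (V → ZMod d) ℂ :=
  Matrix.of fun j k => if ∀ b, b ≠ a → j b = k b then A (j a) (k a) else 0

/-- The qudit cluster state `φ_G(k) = d^{−6/2} ω^{∑_{{a,b}∈E} k_a k_b}` of the graph `G`
on vertices `{1,…,6}` with edge set `{{1,3},{2,4},{3,4},{3,5},{4,6}}`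
(vertices indexed here by `Fin 6` as 0,…,5, so the edges are
`{0,2},{1,3},{2,3},{2,4},{3,5}`). -/
noncomputable def sixGraphState (d : ℕ) [NeZero d] : (Fin 6 → ZMod d) → ℂ :=
  fun k => (Real.sqrt ((d : ℝ) ^ 6))⁻¹ *
    qomega d ^ ((k 0).val * (k 2).val + (k 1).val * (k 3).val + (k 2).val * (k 3).val +
      (k 2).val * (k 4).val + (k 3).val * (k 5).val)

/-!
Write `φ_G(k) = c · ω^{q(k)}` with `q(k) = Σ_{{a,b}∈E} k_a k_b` read in `ZMod d`, which is
legitimate because `ω^d = 1`. Then `X_a` and `X_a†` shift `k_a` by `±1` and `Z_a†` multiplies by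
`ω^{-k_a}`, so each identity reduces to a polynomial identity in `ZMod d`: for instance
`X₁ X₅†` changes `q` by `k₃ - k₃`, since vertices 1 and 5 have the same unique neighbour 3.
-/

section RootOfUnity

variable {d : ℕ}

lemma star_qomega : star (qomega d) = (qomega d)⁻¹ := by
  rw [qomega, Complex.star_def, ← Complex.exp_conj, ← Complex.exp_neg]
  congr 1
  simp [Complex.conj_I, map_ofNat]
  ring

variable [NeZero d]

noncomputable def qomegaPow (n : ZMod d) : ℂ := qomega d ^ n.val

lemma qomega_pow_self : qomega d ^ d = 1 := by
  have hd : (d : ℂ) ≠ 0 := Nat.cast_ne_zero.mpr (NeZero.ne d)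
  rw [qomega, ← Complex.exp_nat_mul, mul_div_cancel₀ _ hd, Complex.exp_two_pi_mul_I]

lemma qomega_pow_eq_qomegaPow (n : ℕ) : qomega d ^ n = qomegaPow (n : ZMod d) := by
  rw [qomegaPow, ZMod.val_natCast, ← pow_eq_pow_mod n qomega_pow_self]

lemma qomegaPow_add (m n : ZMod d) : qomegaPow (m + n) = qomegaPow m * qomegaPow n := by
  have hcast : ((m.val + n.val : ℕ) : ZMod d) = m + n := by
    push_cast [ZMod.natCast_zmod_val]
    rfl
  rw [← hcast, ← qomega_pow_eq_qomegaPow, pow_add]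
  rfl

lemma star_qomegaPow (n : ZMod d) : star (qomegaPow n) = qomegaPow (-n) := by
  have hinv : qomegaPow n * qomegaPow (-n) = 1 := by
    rw [← qomegaPow_add, add_neg_cancel, qomegaPow, ZMod.val_zero, pow_zero]
  rw [qomegaPow, star_pow, star_qomega, inv_pow, ← qomegaPow, inv_eq_of_mul_eq_one_right hinv]

end RootOfUnity

section SiteOperators

variable {d : ℕ} [NeZero d] {V : Type} [Fintype V] [DecidableEq V]

lemma conjTranspose_siteOp (a : V) (A : Matrix (ZMod d) (ZMod d) ℂ) :
    (siteOp d a A)ᴴ = siteOp d a Aᴴ := by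
  ext j k
  simp only [conjTranspose_apply, siteOp, of_apply, apply_ite star, star_zero]
  simp_rw [eq_comm (a := k _)]

lemma siteOp_mulVec_apply (a : V) (A : Matrix (ZMod d) (ZMod d) ℂ) (φ : (V → ZMod d) → ℂ)
    (j : V → ZMod d) :
    (siteOp d a A *ᵥ φ) j = ∑ x, A (j a) x * φ (Function.update j a x) := by
  have hentry : ∀ k, siteOp d a A j k =
      ∑ x, if k = Function.update j a x then A (j a) x else 0 := by
    intro k
    rw [Finset.sum_eq_single (k a)]
    · simp [siteOp, Function.eq_update_iff, eq_comm]
    · intro x _ hx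
      simp [Function.eq_update_iff, Ne.symm hx]
    · simp
  simp only [mulVec, dotProduct, hentry, Finset.sum_mul, ite_mul, zero_mul]
  rw [Finset.sum_comm]
  simp

lemma siteOp_Xmat_mulVec_apply (a : V) (φ : (V → ZMod d) → ℂ) (j : V → ZMod d) :
    (siteOp d a (Xmat d) *ᵥ φ) j = φ (Function.update j a (j a + 1)) := by
  simp [siteOp_mulVec_apply, Xmat]

lemma conjTranspose_siteOp_Xmat_mulVec_apply (a : V) (φ : (V → ZMod d) → ℂ)
    (j : V → ZMod d) :
    ((siteOp d a (Xmat d))ᴴ *ᵥ φ) j = φ (Function.update j a (j a - 1)) := by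
  simp [conjTranspose_siteOp, siteOp_mulVec_apply, Xmat, ← sub_eq_iff_eq_add, eq_comm]

lemma conjTranspose_siteOp_Zmat_mulVec_apply (a : V) (φ : (V → ZMod d) → ℂ)
    (j : V → ZMod d) :
    ((siteOp d a (Zmat d))ᴴ *ᵥ φ) j = qomegaPow (-j a) * φ j := by
  rw [← star_qomegaPow]
  simp [conjTranspose_siteOp, siteOp_mulVec_apply, Zmat, diagonal_apply, qomegaPow]

end SiteOperators

lemma sixGraphState_apply (d : ℕ) [NeZero d] (k : Fin 6 → ZMod d) :
    sixGraphState d k = (Real.sqrt ((d : ℝ) ^ 6))⁻¹ *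
      qomegaPow (k 0 * k 2 + k 1 * k 3 + k 2 * k 3 + k 2 * k 4 + k 3 * k 5) := by
  rw [sixGraphState, qomega_pow_eq_qomegaPow]
  push_cast [ZMod.natCast_zmod_val]
  rfl

theorem six_qudit_graph_state_identities_general (d : ℕ) [NeZero d] :
    (siteOp d (0 : Fin 6) (Xmat d) * (siteOp d (4 : Fin 6) (Xmat d))ᴴ).mulVec
      (sixGraphState d) = sixGraphState d ∧
    (siteOp d (1 : Fin 6) (Xmat d) * (siteOp d (5 : Fin 6) (Xmat d))ᴴ).mulVec
      (sixGraphState d) = sixGraphState d ∧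
    ((siteOp d (0 : Fin 6) (Zmat d))ᴴ * siteOp d (2 : Fin 6) (Xmat d) *
        (siteOp d (4 : Fin 6) (Zmat d))ᴴ * (siteOp d (5 : Fin 6) (Xmat d))ᴴ).mulVec
      (sixGraphState d) = sixGraphState d ∧
    ((siteOp d (1 : Fin 6) (Zmat d))ᴴ * siteOp d (3 : Fin 6) (Xmat d) *
        (siteOp d (5 : Fin 6) (Zmat d))ᴴ * (siteOp d (4 : Fin 6) (Xmat d))ᴴ).mulVec
      (sixGraphState d) = sixGraphState d := by
  refine ⟨?_, ?_, ?_, ?_⟩ <;> funext j <;>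
    simp only [← mulVec_mulVec, siteOp_Xmat_mulVec_apply, conjTranspose_siteOp_Xmat_mulVec_apply,
      conjTranspose_siteOp_Zmat_mulVec_apply, sixGraphState_apply, Function.update_apply,
      Fin.reduceEq, if_true, if_false, mul_left_comm (qomegaPow _), ← qomegaPow_add]
  all_goals congr 2; ring

/-- the cluster state of the above six-vertex graph satisfies the derived
correlation identities `X₁ X₅† φ_G = φ_G`, `X₂ X₆† φ_G = φ_G`,
`Z₁† X₃ Z₅† X₆† φ_G = φ_G`, and `Z₂† X₄ Z₆† X₅† φ_G = φ_G`. -/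
theorem six_qudit_graph_state_identities (d : ℕ) [NeZero d] (hd : 2 ≤ d) :
    (siteOp d (0 : Fin 6) (Xmat d) * (siteOp d (4 : Fin 6) (Xmat d))ᴴ).mulVec
      (sixGraphState d) = sixGraphState d ∧
    (siteOp d (1 : Fin 6) (Xmat d) * (siteOp d (5 : Fin 6) (Xmat d))ᴴ).mulVec
      (sixGraphState d) = sixGraphState d ∧
    ((siteOp d (0 : Fin 6) (Zmat d))ᴴ * siteOp d (2 : Fin 6) (Xmat d) *
        (siteOp d (4 : Fin 6) (Zmat d))ᴴ * (siteOp d (5 : Fin 6) (Xmat d))ᴴ).mulVec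
      (sixGraphState d) = sixGraphState d ∧
    ((siteOp d (1 : Fin 6) (Zmat d))ᴴ * siteOp d (3 : Fin 6) (Xmat d) *
        (siteOp d (5 : Fin 6) (Zmat d))ᴴ * (siteOp d (4 : Fin 6) (Xmat d))ᴴ).mulVec
      (sixGraphState d) = sixGraphState d :=
  six_qudit_graph_state_identities_general d
end

section
/- There exists a unitary operator T on ℂ^d ⊗ ℂ^d satisfying the four conjugation relations T (X ⊗ I) T† = X† ⊗ I, T (I ⊗ X) T† = I ⊗ X†, T (Z ⊗ I) T† = Z† ⊗ X†, and T (I ⊗ Z) T† = X† ⊗ Z†. -/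
open Matrix Kronecker

/-!
The gate is `T = d⁻¹ W` with `W (p, q) = ω ^ (-(p₁ + q₁) (p₂ + q₂))`. Since `W` only depends on
`p + q` (a Hankel matrix over `(ℤ/d)²`), multiplying it on the right by a translation is the
same as multiplying it on the left by the opposite translation: this gives the two `X`-relations.
The phase `f x = ω ^ (-x₁ x₂)` is quasi-periodic, `f (x - e₂) = ω ^ x₁ f x` and
`f (x - e₁) = ω ^ x₂ f x`, which turns the diagonal matrix `Z ⊗ I` into `Z† ⊗ X†` and `I ⊗ Z`
into `X† ⊗ Z†`. Finally `W W† = d² I` by orthogonality of the characters of `ℤ/d`.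
-/

namespace Matrix

section Hankel

variable {G R : Type*}

def hankel [Add G] (f : G → R) : Matrix G G R := of fun p q => f (p + q)

variable [AddCommGroup G] [Fintype G] [DecidableEq G]

theorem hankel_mul_permMatrix_addRight [NonAssocSemiring R] (f : G → R) (s : G) :
    hankel f * (Equiv.addRight s).permMatrix R
      = (Equiv.addRight (-s)).permMatrix R * hankel f := by
  rw [PEquiv.mul_toMatrix_toPEquiv, PEquiv.toMatrix_toPEquiv_mul]
  ext p q
  simp only [hankel, submatrix_apply, of_apply, id, Equiv.addRight_symm, Equiv.coe_addRight]
  congr 1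
  abel

theorem hankel_mul_diagonal_addChar [CommSemiring R] (ψ : AddChar G R) (f : G → R) (t : G)
    (hf : ∀ x, f (x + t) = ψ x * f x) :
    hankel f * diagonal ψ
      = diagonal (fun p => ψ (-p)) * (Equiv.addRight t).permMatrix R * hankel f := by
  rw [mul_assoc, PEquiv.toMatrix_toPEquiv_mul]
  ext p q
  simp only [mul_diagonal, diagonal_mul, hankel, submatrix_apply, of_apply, id,
    Equiv.coe_addRight, add_right_comm p t q, hf, ← mul_assoc, ← AddChar.map_add_eq_mul,
    neg_add_cancel_left]
  exact mul_comm _ _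

end Hankel

theorem permMatrix_addRight_kronecker {G H R : Type*} [AddGroup G] [DecidableEq G] [AddGroup H]
    [DecidableEq H] [MulZeroOneClass R] (a : G) (b : H) :
    (Equiv.addRight a).permMatrix R ⊗ₖ (Equiv.addRight b).permMatrix R
      = (Equiv.addRight (a, b)).permMatrix R := by
  ext ⟨p, p'⟩ ⟨q, q'⟩
  simp only [kroneckerMap_apply, PEquiv.toMatrix_apply, Equiv.toPEquiv_apply, Option.mem_def,
    Option.some.injEq, Equiv.coe_addRight, Prod.mk_add_mk, Prod.mk.injEq, ite_zero_mul_ite_zero,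
    mul_one]

theorem permMatrix_addRight_zero {G R : Type*} [AddGroup G] [DecidableEq G] [Zero R] [One R] :
    (Equiv.addRight (0 : G)).permMatrix R = 1 := by
  rw [Equiv.addRight_zero, permMatrix_one]

theorem smul_mul_mul_conjTranspose_eq {n α : Type*} [Fintype n] [DecidableEq n] [CommRing α]
    [StarRing α] {c : α} {W A B : Matrix n n α} (hT : c • W ∈ unitaryGroup n α)
    (h : W * A = B * W) : c • W * A * (c • W)ᴴ = B := by
  rw [smul_mul, h, ← Matrix.mul_smul, mul_assoc, ← star_eq_conjTranspose,
    Unitary.mul_star_self_of_mem hT, mul_one]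

theorem inv_smul_mem_unitaryGroup {n 𝕜 : Type*} [Fintype n] [DecidableEq n] [RCLike 𝕜]
    {W : Matrix n n 𝕜} {r : ℝ} (hr : r ≠ 0) (hW : W * Wᴴ = ((r : 𝕜) ^ 2) • 1) :
    (r : 𝕜)⁻¹ • W ∈ unitaryGroup n 𝕜 := by
  have hr' : (r : 𝕜) ≠ 0 := RCLike.ofReal_ne_zero.mpr hr
  rw [mem_unitaryGroup_iff, star_eq_conjTranspose, conjTranspose_smul, smul_mul_smul_comm, hW,
    smul_smul, star_inv₀, RCLike.star_def, RCLike.conj_ofReal]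
  field_simp
  exact one_smul _ _

end Matrix

section PairingHankel

variable {A 𝕜 : Type*} [CommRing A] [Fintype A] [DecidableEq A] [RCLike 𝕜]

def pairingHankel (ψ : AddChar A 𝕜) : Matrix (A × A) (A × A) 𝕜 :=
  hankel fun x => ψ (-(x.1 * x.2))

theorem pairingHankel_mul_conjTranspose {ψ : AddChar A 𝕜} (hψ : ψ.IsPrimitive) :
    pairingHankel ψ * (pairingHankel ψ)ᴴ = ((Fintype.card A : 𝕜) ^ 2) • 1 := by
  ext p q
  have hterm : ∀ r : A × A, pairingHankel ψ p r * star (pairingHankel ψ q r)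
      = ψ (q.1 * q.2 - p.1 * p.2) * (ψ (r.1 * (q.2 - p.2)) * ψ (r.2 * (q.1 - p.1))) := by
    intro r
    simp only [pairingHankel, hankel, of_apply, ← starRingEnd_apply, ← AddChar.map_neg_eq_conj,
      ← AddChar.map_add_eq_mul, Prod.fst_add, Prod.snd_add]
    congr 1
    ring
  simp only [mul_apply, conjTranspose_apply, hterm, ← Finset.mul_sum, Fintype.sum_prod_type,
    ← Finset.sum_mul, AddChar.sum_mulShift _ hψ, sub_eq_zero]
  obtain rfl | hpq := eq_or_ne p q
  · simp [sq]
  · have hne : q.1 ≠ p.1 ∨ q.2 ≠ p.2 := by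
      contrapose! hpq
      exact Prod.ext hpq.1.symm hpq.2.symm
    rcases hne with hne | hne <;> simp [hpq, hne]

theorem pairingHankel_mul_permMatrix_addRight (ψ : AddChar A 𝕜) (s : A × A) :
    pairingHankel ψ * (Equiv.addRight s).permMatrix 𝕜
      = (Equiv.addRight (-s)).permMatrix 𝕜 * pairingHankel ψ :=
  hankel_mul_permMatrix_addRight _ s

theorem pairingHankel_mul_diagonal_fst (ψ : AddChar A 𝕜) :
    pairingHankel ψ * diagonal (fun p => ψ p.1)
      = diagonal (fun p => ψ (-p.1)) * (Equiv.addRight (0, -1)).permMatrix 𝕜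
        * pairingHankel ψ :=
  hankel_mul_diagonal_addChar (ψ.compAddMonoidHom (AddMonoidHom.fst A A)) _ _ fun x => by
    simp only [AddChar.compAddMonoidHom_apply, AddMonoidHom.coe_fst, ← AddChar.map_add_eq_mul,
      Prod.fst_add, Prod.snd_add]
    congr 1
    ring

theorem pairingHankel_mul_diagonal_snd (ψ : AddChar A 𝕜) :
    pairingHankel ψ * diagonal (fun p => ψ p.2)
      = diagonal (fun p => ψ (-p.2)) * (Equiv.addRight (-1, 0)).permMatrix 𝕜
        * pairingHankel ψ :=
  hankel_mul_diagonal_addChar (ψ.compAddMonoidHom (AddMonoidHom.snd A A)) _ _ fun x => by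
    simp only [AddChar.compAddMonoidHom_apply, AddMonoidHom.coe_snd, ← AddChar.map_add_eq_mul,
      Prod.fst_add, Prod.snd_add]
    congr 1
    ring

end PairingHankel

section Pauli

variable (d : ℕ) [NeZero d]

theorem Xmat_eq_permMatrix : Xmat d = (Equiv.addRight 1).permMatrix ℂ := by
  ext j k
  simp [Xmat, eq_comm]

theorem conjTranspose_Xmat : (Xmat d)ᴴ = (Equiv.addRight (-1)).permMatrix ℂ := by
  rw [Xmat_eq_permMatrix, conjTranspose_permMatrix, Equiv.neg_addRight]

theorem Zmat_eq_diagonal : Zmat d = diagonal fun k => ZMod.stdAddChar k := by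
  ext j k
  simp only [Zmat, qomega, ZMod.stdAddChar_apply, ZMod.toCircle_apply, diagonal_apply,
    ← Complex.exp_nat_mul]
  ring_nf

theorem conjTranspose_Zmat : (Zmat d)ᴴ = diagonal fun k => ZMod.stdAddChar (-k) := by
  rw [Zmat_eq_diagonal, diagonal_conjTranspose]
  congr 1
  ext k
  exact (AddChar.map_neg_eq_conj _ k).symm

end Pauli

section QuditGate

variable (d : ℕ) [NeZero d]

local notation "W" => pairingHankel (ZMod.stdAddChar (N := d))

theorem pairingHankel_mul_Xmat_kronecker_one :
    W * (Xmat d ⊗ₖ (1 : Matrix (ZMod d) (ZMod d) ℂ))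
      = ((Xmat d)ᴴ ⊗ₖ (1 : Matrix (ZMod d) (ZMod d) ℂ)) * W := by
  rw [conjTranspose_Xmat, Xmat_eq_permMatrix, ← permMatrix_addRight_zero,
    permMatrix_addRight_kronecker, permMatrix_addRight_kronecker,
    pairingHankel_mul_permMatrix_addRight, Prod.neg_mk, neg_zero]

theorem pairingHankel_mul_one_kronecker_Xmat :
    W * ((1 : Matrix (ZMod d) (ZMod d) ℂ) ⊗ₖ Xmat d)
      = ((1 : Matrix (ZMod d) (ZMod d) ℂ) ⊗ₖ (Xmat d)ᴴ) * W := by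
  rw [conjTranspose_Xmat, Xmat_eq_permMatrix, ← permMatrix_addRight_zero,
    permMatrix_addRight_kronecker, permMatrix_addRight_kronecker,
    pairingHankel_mul_permMatrix_addRight, Prod.neg_mk, neg_zero]

theorem pairingHankel_mul_Zmat_kronecker_one :
    W * (Zmat d ⊗ₖ (1 : Matrix (ZMod d) (ZMod d) ℂ)) = ((Zmat d)ᴴ ⊗ₖ (Xmat d)ᴴ) * W := by
  rw [← mul_one (Zmat d)ᴴ, ← one_mul (Xmat d)ᴴ, mul_kronecker_mul, conjTranspose_Zmat,
    conjTranspose_Xmat, Zmat_eq_diagonal, ← diagonal_one, diagonal_kronecker_diagonal,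
    diagonal_kronecker_diagonal, diagonal_one, ← permMatrix_addRight_zero,
    permMatrix_addRight_kronecker]
  simpa only [Pi.one_apply, mul_one] using pairingHankel_mul_diagonal_fst ZMod.stdAddChar

theorem pairingHankel_mul_one_kronecker_Zmat :
    W * ((1 : Matrix (ZMod d) (ZMod d) ℂ) ⊗ₖ Zmat d) = ((Xmat d)ᴴ ⊗ₖ (Zmat d)ᴴ) * W := by
  rw [← one_mul (Xmat d)ᴴ, ← mul_one (Zmat d)ᴴ, mul_kronecker_mul, conjTranspose_Zmat,
    conjTranspose_Xmat, Zmat_eq_diagonal, ← diagonal_one, diagonal_kronecker_diagonal,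
    diagonal_kronecker_diagonal, diagonal_one, ← permMatrix_addRight_zero,
    permMatrix_addRight_kronecker]
  simpa only [Pi.one_apply, one_mul] using pairingHankel_mul_diagonal_snd ZMod.stdAddChar

end QuditGate

theorem two_qudit_gate_exists_general (d : ℕ) [NeZero d] :
    ∃ T : Matrix (ZMod d × ZMod d) (ZMod d × ZMod d) ℂ,
      T ∈ Matrix.unitaryGroup (ZMod d × ZMod d) ℂ ∧
      T * (Xmat d ⊗ₖ (1 : Matrix (ZMod d) (ZMod d) ℂ)) * Tᴴ
        = (Xmat d)ᴴ ⊗ₖ (1 : Matrix (ZMod d) (ZMod d) ℂ) ∧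
      T * ((1 : Matrix (ZMod d) (ZMod d) ℂ) ⊗ₖ Xmat d) * Tᴴ
        = (1 : Matrix (ZMod d) (ZMod d) ℂ) ⊗ₖ (Xmat d)ᴴ ∧
      T * (Zmat d ⊗ₖ (1 : Matrix (ZMod d) (ZMod d) ℂ)) * Tᴴ
        = (Zmat d)ᴴ ⊗ₖ (Xmat d)ᴴ ∧
      T * ((1 : Matrix (ZMod d) (ZMod d) ℂ) ⊗ₖ Zmat d) * Tᴴ
        = (Xmat d)ᴴ ⊗ₖ (Zmat d)ᴴ := by
  have hW : pairingHankel ZMod.stdAddChar * (pairingHankel ZMod.stdAddChar)ᴴ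
      = (((d : ℝ) : ℂ) ^ 2) • (1 : Matrix (ZMod d × ZMod d) (ZMod d × ZMod d) ℂ) := by
    simpa using pairingHankel_mul_conjTranspose (ZMod.isPrimitive_stdAddChar d)
  have hT := inv_smul_mem_unitaryGroup (Nat.cast_ne_zero.mpr (NeZero.ne d)) hW
  exact ⟨_, hT, smul_mul_mul_conjTranspose_eq hT (pairingHankel_mul_Xmat_kronecker_one d),
    smul_mul_mul_conjTranspose_eq hT (pairingHankel_mul_one_kronecker_Xmat d),
    smul_mul_mul_conjTranspose_eq hT (pairingHankel_mul_Zmat_kronecker_one d),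
    smul_mul_mul_conjTranspose_eq hT (pairingHankel_mul_one_kronecker_Zmat d)⟩

/-- there exists a unitary `T` on `ℂ^d ⊗ ℂ^d` with
`T (X ⊗ I) T† = X† ⊗ I`, `T (I ⊗ X) T† = I ⊗ X†`, `T (Z ⊗ I) T† = Z† ⊗ X†`,
and `T (I ⊗ Z) T† = X† ⊗ Z†`. -/
theorem two_qudit_gate_exists (d : ℕ) [NeZero d] (hd : 2 ≤ d) :
    ∃ T : Matrix (ZMod d × ZMod d) (ZMod d × ZMod d) ℂ,
      T ∈ Matrix.unitaryGroup (ZMod d × ZMod d) ℂ ∧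
      T * (Xmat d ⊗ₖ (1 : Matrix (ZMod d) (ZMod d) ℂ)) * Tᴴ
        = (Xmat d)ᴴ ⊗ₖ (1 : Matrix (ZMod d) (ZMod d) ℂ) ∧
      T * ((1 : Matrix (ZMod d) (ZMod d) ℂ) ⊗ₖ Xmat d) * Tᴴ
        = (1 : Matrix (ZMod d) (ZMod d) ℂ) ⊗ₖ (Xmat d)ᴴ ∧
      T * (Zmat d ⊗ₖ (1 : Matrix (ZMod d) (ZMod d) ℂ)) * Tᴴ
        = (Zmat d)ᴴ ⊗ₖ (Xmat d)ᴴ ∧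
      T * ((1 : Matrix (ZMod d) (ZMod d) ℂ) ⊗ₖ Zmat d) * Tᴴ
        = (Xmat d)ᴴ ⊗ₖ (Zmat d)ᴴ :=
  two_qudit_gate_exists_general d
end

section
/- Let T be any unitary operator on ℂ^d ⊗ ℂ^d satisfying T (X ⊗ I) T† = X† ⊗ I, T (I ⊗ X) T† = I ⊗ X†, T (Z ⊗ I) T† = Z† ⊗ X†, and T (I ⊗ Z) T† = X† ⊗ Z†. Then T is an imprimitive two-qudit gate: (i) T maps every product basis vector e_j ⊗ e_k to a maximally entangled state, i.e. the reduced density matrix of T(e_j ⊗ e_k) on either factor equals I/d; and (ii) there exist no unitaries S₁, S₂ on ℂ^d such that T = S₁ ⊗ S₂ or T = (S₁ ⊗ S₂)∘P, where P is the swap operator P(u ⊗ v) = v ⊗ u. -/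
/-!
Read on a column `ψ = T (e_j ⊗ e_k)`, the relations for `Z ⊗ I` and `I ⊗ Z` say that shifting
either tensor index multiplies `ψ` by a phase: `ψ(a,c) = ω^(a+j) ψ(a,c+1)` and
`ψ(a,c) = ω^(c+k) ψ(a+1,c)`. The second makes the diagonal of the reduced density matrix
constant, hence equal to `1/d` since `ψ` is a unit vector. Reindexing `c ↦ c+1` multiplies an
off-diagonal entry `(a,b)` by `ω^(a-b) ≠ 1`, so it vanishes. For `T = S₁ ⊗ S₂` or
`(S₁ ⊗ S₂) P`, the column `T (e_0 ⊗ e_0)` would be a product vector, whose reduced density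
matrix has rank one and so cannot be `I/d` once `d ≥ 2`.
-/

open Matrix Kronecker

/-- The swap operator `P (u ⊗ v) = v ⊗ u` on `ℂ^d ⊗ ℂ^d`. -/
noncomputable def swapOp (d : ℕ) [NeZero d] :
    Matrix (ZMod d × ZMod d) (ZMod d × ZMod d) ℂ :=
  Matrix.of fun p q => if p.1 = q.2 ∧ p.2 = q.1 then 1 else 0

theorem mul_star_eq_one_of_norm_eq_one {z : ℂ} (hz : ‖z‖ = 1) : z * star z = 1 := by
  rw [Complex.star_def, Complex.mul_conj', hz]; norm_num

section ReducedDensity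

variable {ι κ : Type*} [Fintype κ]

/-- The reduced density matrix of `ψ ∈ ℂ^ι ⊗ ℂ^κ` on the first factor; the one on the second
factor is that of `ψ ∘ Prod.swap`. -/
def reducedDensity (ψ : ι × κ → ℂ) : Matrix ι ι ℂ :=
  of fun a b => ∑ c, ψ (a, c) * star (ψ (b, c))

theorem trace_reducedDensity [Fintype ι] (ψ : ι × κ → ℂ) :
    (reducedDensity ψ).trace = ∑ p, ψ p * star (ψ p) :=
  (Fintype.sum_prod_type fun p => ψ p * star (ψ p)).symm

theorem reducedDensity_apply_eq_zero_of_shift [AddGroup κ] {ψ : ι × κ → ℂ} {φ : ι → ℂ}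
    (g : κ) (hψ : ∀ a c, ψ (a, c) = φ a * ψ (a, c + g)) (hφ : ∀ a, ‖φ a‖ = 1)
    {a b : ι} (hab : φ a ≠ φ b) : reducedDensity ψ a b = 0 := by
  set ρ := reducedDensity ψ a b
  have hshift : ρ = φ a * star (φ b) * ρ := calc
    ρ = ∑ c, φ a * star (φ b) * (ψ (a, c + g) * star (ψ (b, c + g))) :=
      Finset.sum_congr rfl fun c _ => by rw [hψ a c, hψ b c, star_mul']; ring
    _ = φ a * star (φ b) * ρ := by
      rw [← Finset.mul_sum]
      exact congrArg _ (Equiv.sum_comp (Equiv.addRight g) fun c => ψ (a, c) * star (ψ (b, c)))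
  have hphase : φ a * star (φ b) ≠ 1 := fun h => hab <| by
    rw [← mul_one (φ a), ← mul_star_eq_one_of_norm_eq_one (hφ b), mul_comm (φ b),
      ← mul_assoc, h, one_mul]
  have hρ : (1 - φ a * star (φ b)) * ρ = 0 := by linear_combination hshift
  exact (mul_eq_zero.mp hρ).resolve_left (sub_ne_zero.mpr hphase.symm)

theorem reducedDensity_apply_self_eq_of_shift [Add ι] {ψ : ι × κ → ℂ} {φ : κ → ℂ}
    (g : ι) (hψ : ∀ a c, ψ (a, c) = φ c * ψ (a + g, c)) (hφ : ∀ c, ‖φ c‖ = 1) (a : ι) :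
    reducedDensity ψ a a = reducedDensity ψ (a + g) (a + g) :=
  Finset.sum_congr rfl fun c _ => by
    rw [hψ a c, star_mul', mul_mul_mul_comm, mul_star_eq_one_of_norm_eq_one (hφ c), one_mul]

theorem reducedDensity_mul_apply_of_product (u : ι → ℂ) (v : κ → ℂ) (a b : ι) :
    reducedDensity (fun p => u p.1 * v p.2) a a *
        reducedDensity (fun p => u p.1 * v p.2) b b =
      reducedDensity (fun p => u p.1 * v p.2) a b *
        reducedDensity (fun p => u p.1 * v p.2) b a := by
  simp only [reducedDensity, of_apply, star_mul', Finset.sum_mul, Finset.mul_sum]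
  refine Finset.sum_congr rfl fun c _ => Finset.sum_congr rfl fun c' _ => ?_
  ring

theorem reducedDensity_product_ne_smul_one [DecidableEq ι] [Nontrivial ι] (u : ι → ℂ)
    (v : κ → ℂ) {r : ℂ} (hr : r ≠ 0) : reducedDensity (fun p => u p.1 * v p.2) ≠ r • 1 := by
  intro h
  obtain ⟨a, b, hab⟩ := exists_pair_ne ι
  have := reducedDensity_mul_apply_of_product u v a b
  simp [h, hab, hab.symm, hr] at this

end ReducedDensity

theorem reducedDensity_eq_smul_one_of_shifts {n : ℕ} [NeZero n] {κ : Type*} [Fintype κ]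
    [AddGroup κ] {ψ : ZMod n × κ → ℂ} {φ : ZMod n → ℂ} {χ : κ → ℂ} (g : κ)
    (hrow : ∀ a c, ψ (a, c) = φ a * ψ (a, c + g)) (hφ : ∀ a, ‖φ a‖ = 1)
    (hφ_inj : Function.Injective φ)
    (hcol : ∀ a c, ψ (a, c) = χ c * ψ (a + 1, c)) (hχ : ∀ c, ‖χ c‖ = 1)
    (hψ : ∑ p, ψ p * star (ψ p) = 1) :
    reducedDensity ψ = (n : ℂ)⁻¹ • 1 := by
  have hper : Function.Periodic (fun a => reducedDensity ψ a a) 1 := fun a =>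
    (reducedDensity_apply_self_eq_of_shift 1 hcol hχ a).symm
  have hdiag : ∀ a, reducedDensity ψ a a = reducedDensity ψ 0 0 := fun a => by
    simpa using hper.nat_mul_eq a.val
  have htrace : (n : ℂ) * reducedDensity ψ 0 0 = 1 := calc
    (n : ℂ) * reducedDensity ψ 0 0 = ∑ a, reducedDensity ψ a a := by simp [hdiag]
    _ = 1 := by rw [← hψ, ← trace_reducedDensity]; rfl
  ext a b
  rcases eq_or_ne a b with rfl | hab
  · rw [hdiag, Matrix.smul_apply, one_apply_eq, smul_eq_mul, mul_one,
      eq_inv_of_mul_eq_one_right htrace]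
  · rw [reducedDensity_apply_eq_zero_of_shift g hrow hφ (hφ_inj.ne hab), Matrix.smul_apply,
      one_apply_ne hab, smul_zero]

theorem mul_eq_mul_of_mul_mul_star_eq {R : Type*} [Monoid R] [StarMul R] {T A B : R}
    (hT : T ∈ unitary R) (h : T * A * star T = B) : T * A = B * T := by
  rw [← h, mul_assoc _ (star T), Unitary.star_mul_self_of_mem hT, mul_one]

theorem Matrix.sum_mul_star_apply_of_mem_unitaryGroup {n : Type*} [Fintype n] [DecidableEq n]
    {T : Matrix n n ℂ} (hT : T ∈ unitaryGroup n ℂ) (q : n) :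
    ∑ p, T p q * star (T p q) = 1 := by
  have h := congrFun (congrFun (Matrix.mem_unitaryGroup_iff'.mp hT) q) q
  simpa [Matrix.mul_apply, mul_comm] using h

section Pauli

variable {d : ℕ} [NeZero d]

theorem isPrimitiveRoot_qomega : IsPrimitiveRoot (qomega d) d :=
  Complex.isPrimitiveRoot_exp d (NeZero.ne d)

theorem norm_qomega_pow (m : ℕ) : ‖qomega d ^ m‖ = 1 := by
  rw [norm_pow, Complex.norm_eq_one_of_pow_eq_one isPrimitiveRoot_qomega.pow_eq_one
    (NeZero.ne d), one_pow]

theorem reducedDensity_eq_smul_one_of_qomega_shifts {ψ : ZMod d × ZMod d → ℂ} (m m' : ℕ)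
    (hrow : ∀ a c, ψ (a, c) = qomega d ^ a.val * qomega d ^ m * ψ (a, c + 1))
    (hcol : ∀ a c, ψ (a, c) = qomega d ^ c.val * qomega d ^ m' * ψ (a + 1, c))
    (hψ : ∑ p, ψ p * star (ψ p) = 1) :
    reducedDensity ψ = (d : ℂ)⁻¹ • 1 := by
  have hinj : Function.Injective fun a : ZMod d => qomega d ^ a.val * qomega d ^ m :=
    fun a b h => ZMod.val_injective d <| isPrimitiveRoot_qomega.pow_inj a.val_lt b.val_lt <|
      mul_right_cancel₀ (pow_ne_zero _ (Complex.exp_ne_zero _)) h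
  refine reducedDensity_eq_smul_one_of_shifts 1 hrow (fun a => ?_) hinj hcol (fun c => ?_) hψ
    <;> rw [← pow_add, norm_qomega_pow]

theorem mul_Zmat_kronecker_one_apply {ι : Type*} (M : Matrix ι (ZMod d × ZMod d) ℂ)
    (p : ι) (j k : ZMod d) :
    (M * (Zmat d ⊗ₖ (1 : Matrix (ZMod d) (ZMod d) ℂ))) p (j, k) =
      M p (j, k) * qomega d ^ j.val := by
  simp [Matrix.mul_apply, Zmat, Matrix.one_apply, Fintype.sum_prod_type,
    Matrix.diagonal_apply, mul_ite, Finset.sum_ite_eq']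

theorem mul_one_kronecker_Zmat_apply {ι : Type*} (M : Matrix ι (ZMod d × ZMod d) ℂ)
    (p : ι) (j k : ZMod d) :
    (M * ((1 : Matrix (ZMod d) (ZMod d) ℂ) ⊗ₖ Zmat d)) p (j, k) =
      M p (j, k) * qomega d ^ k.val := by
  simp [Matrix.mul_apply, Zmat, Matrix.one_apply, Fintype.sum_prod_type,
    Matrix.diagonal_apply, mul_ite, Finset.sum_ite_eq']

theorem Zmat_kronecker_Xmat_conjTranspose_mul_apply {ι : Type*}
    (M : Matrix (ZMod d × ZMod d) ι ℂ) (a c : ZMod d) (q : ι) :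
    ((Zmat d)ᴴ ⊗ₖ (Xmat d)ᴴ * M) (a, c + 1) q = star (qomega d ^ a.val) * M (a, c) q := by
  simp [Matrix.mul_apply, Zmat, Xmat, Matrix.conjTranspose_apply, Fintype.sum_prod_type,
    Matrix.diagonal_apply, mul_ite, ite_mul, Finset.sum_ite_eq]

theorem Xmat_kronecker_Zmat_conjTranspose_mul_apply {ι : Type*}
    (M : Matrix (ZMod d × ZMod d) ι ℂ) (a c : ZMod d) (q : ι) :
    ((Xmat d)ᴴ ⊗ₖ (Zmat d)ᴴ * M) (a + 1, c) q = star (qomega d ^ c.val) * M (a, c) q := by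
  simp [Matrix.mul_apply, Zmat, Xmat, Matrix.conjTranspose_apply, Fintype.sum_prod_type,
    Matrix.diagonal_apply, mul_ite, ite_mul, Finset.sum_ite_eq]

theorem mul_swapOp_apply {ι : Type*} (M : Matrix ι (ZMod d × ZMod d) ℂ) (p : ι)
    (j k : ZMod d) : (M * swapOp d) p (j, k) = M p (k, j) := by
  simp [Matrix.mul_apply, swapOp, Fintype.sum_prod_type, ite_and, mul_ite, Finset.sum_ite_eq']

theorem eq_qomega_pow_mul_of_mul_eq_star_mul {x y z : ℂ} (m : ℕ)
    (h : x * z = star (qomega d ^ m) * y) :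
    y = qomega d ^ m * x * z := by
  rw [mul_assoc, h, ← mul_assoc, mul_star_eq_one_of_norm_eq_one (norm_qomega_pow m), one_mul]

variable {T : Matrix (ZMod d × ZMod d) (ZMod d × ZMod d) ℂ}

theorem apply_eq_mul_apply_add_one_snd (hT : T ∈ unitaryGroup (ZMod d × ZMod d) ℂ)
    (j k : ZMod d)
    (h3 : T * (Zmat d ⊗ₖ (1 : Matrix (ZMod d) (ZMod d) ℂ)) * Tᴴ = (Zmat d)ᴴ ⊗ₖ (Xmat d)ᴴ)
    (a c : ZMod d) :
    T (a, c) (j, k) = qomega d ^ a.val * qomega d ^ j.val * T (a, c + 1) (j, k) := by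
  have h := congrFun (congrFun (mul_eq_mul_of_mul_mul_star_eq (R := Matrix _ _ ℂ) hT h3)
    (a, c + 1)) (j, k)
  rw [mul_Zmat_kronecker_one_apply, Zmat_kronecker_Xmat_conjTranspose_mul_apply] at h
  rw [eq_qomega_pow_mul_of_mul_eq_star_mul _ h]
  ring

theorem apply_eq_mul_apply_add_one_fst (hT : T ∈ unitaryGroup (ZMod d × ZMod d) ℂ)
    (j k : ZMod d)
    (h4 : T * ((1 : Matrix (ZMod d) (ZMod d) ℂ) ⊗ₖ Zmat d) * Tᴴ = (Xmat d)ᴴ ⊗ₖ (Zmat d)ᴴ)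
    (a c : ZMod d) :
    T (a, c) (j, k) = qomega d ^ c.val * qomega d ^ k.val * T (a + 1, c) (j, k) := by
  have h := congrFun (congrFun (mul_eq_mul_of_mul_mul_star_eq (R := Matrix _ _ ℂ) hT h4)
    (a + 1, c)) (j, k)
  rw [mul_one_kronecker_Zmat_apply, Xmat_kronecker_Zmat_conjTranspose_mul_apply] at h
  rw [eq_qomega_pow_mul_of_mul_eq_star_mul _ h]
  ring

end Pauli

theorem two_qudit_gate_imprimitive_general (d : ℕ) [NeZero d] (hd : 2 ≤ d)
    (T : Matrix (ZMod d × ZMod d) (ZMod d × ZMod d) ℂ)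
    (hT : T ∈ Matrix.unitaryGroup (ZMod d × ZMod d) ℂ)
    (h3 : T * (Zmat d ⊗ₖ (1 : Matrix (ZMod d) (ZMod d) ℂ)) * Tᴴ
        = (Zmat d)ᴴ ⊗ₖ (Xmat d)ᴴ)
    (h4 : T * ((1 : Matrix (ZMod d) (ZMod d) ℂ) ⊗ₖ Zmat d) * Tᴴ
        = (Xmat d)ᴴ ⊗ₖ (Zmat d)ᴴ) :
    (∀ j k : ZMod d,
      (Matrix.of fun a b : ZMod d =>
          ∑ c : ZMod d, T (a, c) (j, k) * star (T (b, c) (j, k)))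
        = ((d : ℂ))⁻¹ • (1 : Matrix (ZMod d) (ZMod d) ℂ) ∧
      (Matrix.of fun a b : ZMod d =>
          ∑ c : ZMod d, T (c, a) (j, k) * star (T (c, b) (j, k)))
        = ((d : ℂ))⁻¹ • (1 : Matrix (ZMod d) (ZMod d) ℂ)) ∧
    ¬ ∃ S₁ S₂ : Matrix (ZMod d) (ZMod d) ℂ,
        S₁ ∈ Matrix.unitaryGroup (ZMod d) ℂ ∧ S₂ ∈ Matrix.unitaryGroup (ZMod d) ℂ ∧
        (T = S₁ ⊗ₖ S₂ ∨ T = (S₁ ⊗ₖ S₂) * swapOp d) := by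
  have hfst : ∀ j k, reducedDensity (fun p => T p (j, k)) = (d : ℂ)⁻¹ • 1 := fun j k =>
    reducedDensity_eq_smul_one_of_qomega_shifts j.val k.val
      (apply_eq_mul_apply_add_one_snd hT j k h3) (apply_eq_mul_apply_add_one_fst hT j k h4)
      (sum_mul_star_apply_of_mem_unitaryGroup hT (j, k))
  have hsnd : ∀ j k, reducedDensity (fun p => T p.swap (j, k)) = (d : ℂ)⁻¹ • 1 := fun j k =>
    reducedDensity_eq_smul_one_of_qomega_shifts k.val j.val
      (fun a c => apply_eq_mul_apply_add_one_fst hT j k h4 c a)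
      (fun a c => apply_eq_mul_apply_add_one_snd hT j k h3 c a)
      ((Equiv.sum_comp (Equiv.prodComm _ _) fun p => T p (j, k) * star (T p (j, k))).trans
        (sum_mul_star_apply_of_mem_unitaryGroup hT (j, k)))
  refine ⟨fun j k => ⟨hfst j k, hsnd j k⟩, ?_⟩
  rintro ⟨S₁, S₂, -, -, hT_prod⟩
  have hproduct : (fun p => T p (0, 0)) = fun p => S₁ p.1 0 * S₂ p.2 0 := by
    rcases hT_prod with rfl | rfl
    · rfl
    · exact funext fun p => mul_swapOp_apply _ p 0 0
  have : Fact (1 < d) := ⟨hd⟩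
  have hd0 : (d : ℂ)⁻¹ ≠ 0 := inv_ne_zero (Nat.cast_ne_zero.mpr (NeZero.ne d))
  have h00 := hfst 0 0
  rw [hproduct] at h00
  exact reducedDensity_product_ne_smul_one (S₁ · 0) (S₂ · 0) hd0 h00

/-- any unitary `T` satisfying the four conjugation relations is an
imprimitive two-qudit gate: (i) it maps each product basis vector `e_j ⊗ e_k` to a
maximally entangled state (both reduced density matrices equal `I/d`), and (ii) `T` is
neither of the form `S₁ ⊗ S₂` nor `(S₁ ⊗ S₂) P` for unitaries `S₁, S₂`. -/
theorem two_qudit_gate_imprimitive (d : ℕ) [NeZero d] (hd : 2 ≤ d)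
    (T : Matrix (ZMod d × ZMod d) (ZMod d × ZMod d) ℂ)
    (hT : T ∈ Matrix.unitaryGroup (ZMod d × ZMod d) ℂ)
    (h1 : T * (Xmat d ⊗ₖ (1 : Matrix (ZMod d) (ZMod d) ℂ)) * Tᴴ
        = (Xmat d)ᴴ ⊗ₖ (1 : Matrix (ZMod d) (ZMod d) ℂ))
    (h2 : T * ((1 : Matrix (ZMod d) (ZMod d) ℂ) ⊗ₖ Xmat d) * Tᴴ
        = (1 : Matrix (ZMod d) (ZMod d) ℂ) ⊗ₖ (Xmat d)ᴴ)
    (h3 : T * (Zmat d ⊗ₖ (1 : Matrix (ZMod d) (ZMod d) ℂ)) * Tᴴ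
        = (Zmat d)ᴴ ⊗ₖ (Xmat d)ᴴ)
    (h4 : T * ((1 : Matrix (ZMod d) (ZMod d) ℂ) ⊗ₖ Zmat d) * Tᴴ
        = (Xmat d)ᴴ ⊗ₖ (Zmat d)ᴴ) :
    (∀ j k : ZMod d,
      (Matrix.of fun a b : ZMod d =>
          ∑ c : ZMod d, T (a, c) (j, k) * star (T (b, c) (j, k)))
        = ((d : ℂ))⁻¹ • (1 : Matrix (ZMod d) (ZMod d) ℂ) ∧
      (Matrix.of fun a b : ZMod d =>
          ∑ c : ZMod d, T (c, a) (j, k) * star (T (c, b) (j, k)))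
        = ((d : ℂ))⁻¹ • (1 : Matrix (ZMod d) (ZMod d) ℂ)) ∧
    ¬ ∃ S₁ S₂ : Matrix (ZMod d) (ZMod d) ℂ,
        S₁ ∈ Matrix.unitaryGroup (ZMod d) ℂ ∧ S₂ ∈ Matrix.unitaryGroup (ZMod d) ℂ ∧
        (T = S₁ ⊗ₖ S₂ ∨ T = (S₁ ⊗ₖ S₂) * swapOp d) :=
  two_qudit_gate_imprimitive_general d hd T hT h3 h4
end
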